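/- arXiv:2308.11050 — 3 statements merged into one kernel-verified Lean document; each statement's English description precedes it below -/
import Mathlib

section
/- If p is a distribution on {0,1}^P such that there exists q : {0,...,n} → [0,1] with p_H(0) = q(|H|) for all H ⊆ P (with q(0) = 1), then p is symmetric. -/
open Finset

variable {P : Type*} [Fintype P] [DecidableEq P]

/-- Number of nonzero (i.e. `true`) entries of `x`. -/
def nnz (x : P → Bool) : ℕ := (Finset.univ.filter fun i => x i = true).card

/-- `p` is a probability distribution on `{0,1}^P`. -/
def IsDist (p : (P → Bool) → ℝ) : Prop :=
  (∀ x, 0 ≤ p x ∧ p x ≤ 1) ∧ ∑ x, p x = 1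

/-- `p` is symmetric: invariant under all permutations of `P`. -/
def SymmP (p : (P → Bool) → ℝ) : Prop :=
  ∀ (σ : Equiv.Perm P) (x : P → Bool), p (x ∘ σ) = p x

/-- The marginal `p_H` of `p` on a subset `H ⊆ P`. -/
def marginal (p : (P → Bool) → ℝ) (H : Finset P) (u : {i // i ∈ H} → Bool) : ℝ :=
  ∑ z ∈ Finset.univ.filter (fun z : P → Bool => ∀ i : {i // i ∈ H}, z i.1 = u i), p z

/-- The zero-marginal `p_H(𝟎)`: probability that all coordinates in `H` are `0`. -/
def zmarg (p : (P → Bool) → ℝ) (H : Finset P) : ℝ :=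
  ∑ z ∈ Finset.univ.filter (fun z : P → Bool => ∀ i ∈ H, z i = false), p z

/-!
The zero-marginal on the complement of the support of `x` is the sum of `p z` over all `z ≤ x`
(coordinatewise, with `false < true`). A function on a finite poset is determined by its lower
sums (Möbius inversion), so `p` is determined by its zero-marginals. Permuting the coordinates
of `p` permutes the sets `H` without changing `|H|`, so it leaves the zero-marginals
`q |H|` unchanged, hence leaves `p` unchanged.
-/

open Classical in
theorem eq_of_forall_sum_le_eq {α M : Type*} [Fintype α] [PartialOrder α]
    [AddCancelCommMonoid M] {f g : α → M}
    (h : ∀ x, ∑ z with z ≤ x, f z = ∑ z with z ≤ x, g z) : f = g := by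
  funext x
  induction x using WellFoundedLT.induction with
  | _ x ih =>
    have split_le : ∀ k : α → M, ∑ z with z ≤ x, k z = k x + ∑ z with z < x, k z := by
      intro k
      have filter_le : univ.filter (· ≤ x) = insert x (univ.filter (· < x)) := by
        ext z
        simp [le_iff_lt_or_eq, or_comm]
      rw [filter_le, sum_insert (by simp)]
    have sum_lt : ∑ z with z < x, f z = ∑ z with z < x, g z :=
      sum_congr rfl fun z hz => ih z (mem_filter.1 hz).2
    simpa [split_le, sum_lt] using h x

open Classical in
theorem zmarg_compl_support (p : (P → Bool) → ℝ) (x : P → Bool) :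
    zmarg p (univ.filter (x · = true))ᶜ = ∑ z with z ≤ x, p z := by
  refine sum_congr (filter_congr fun z _ => ?_) fun _ _ => rfl
  simp only [mem_compl, mem_filter, mem_univ, true_and, Pi.le_def]
  refine forall_congr' fun i => ?_
  cases z i <;> cases x i <;> decide

open Classical in
theorem eq_of_forall_zmarg_eq {p p' : (P → Bool) → ℝ} (h : ∀ H, zmarg p H = zmarg p' H) :
    p = p' :=
  eq_of_forall_sum_le_eq fun x => by
    rw [← zmarg_compl_support, ← zmarg_compl_support, h]

theorem zmarg_comp_perm (p : (P → Bool) → ℝ) (σ : Equiv.Perm P) (H : Finset P) :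
    zmarg (fun x => p (x ∘ σ)) H = zmarg p (H.map σ.symm.toEmbedding) := by
  refine sum_nbij' (· ∘ σ) (· ∘ σ.symm) ?_ ?_ ?_ ?_ fun _ _ => rfl <;>
    simp only [mem_filter, mem_univ, true_and, mem_map_equiv, Equiv.symm_symm]
  · exact fun z hz i hi => hz (σ i) hi
  · exact fun w hw i hi => hw (σ.symm i) (by simpa using hi)
  all_goals intro _ _; ext; simp

theorem stmt_4_general (p : (P → Bool) → ℝ) (q : ℕ → ℝ)
    (hq : ∀ H : Finset P, zmarg p H = q H.card) :
    SymmP p := by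
  intro σ
  have hzmarg : ∀ H, zmarg (fun x => p (x ∘ σ)) H = zmarg p H := fun H => by
    rw [zmarg_comp_perm, hq, hq, card_map]
  exact congrFun (eq_of_forall_zmarg_eq hzmarg)

theorem stmt_4 (p : (P → Bool) → ℝ) (hp : IsDist p) (q : ℕ → ℝ)
    (hq01 : ∀ h ≤ Fintype.card P, 0 ≤ q h ∧ q h ≤ 1) (hq0 : q 0 = 1)
    (hq : ∀ H : Finset P, zmarg p H = q H.card) :
    SymmP p :=
  stmt_4_general p q hq
end

section
/- Let p be a distribution on {0,1}^P with |P| = n, and suppose there is q : {0,...,n} → [0,1] with p_H(0) = q(|H|) for all H ⊆ P. Define w recursively by w(0) = q(n) and w(k) = q(n−k) − ∑_{i=0}^{k−1} C(k,i) w(i) for k = 1,...,n. Then p(x) = w(nnz(x)) for all x ∈ {0,1}^P. -/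
/-!
Identify `x : P → Bool` with its support `S`. Summing `p` over the configurations vanishing
off `S` gives `zmarg p Sᶜ = ∑_{T ⊆ S} p(1_T) = q(n - |S|)`, while the recursion for `w` says
exactly `q(n - k) = ∑_{i ≤ k} C(k,i) w(i) = ∑_{T ⊆ S} w(|T|)` for `|S| = k`. So
`S ↦ p(1_S)` and `S ↦ w(|S|)` have the same subset sums, and subset sums determine a function
on finsets (Möbius inversion on the Boolean lattice, here by strong induction on `S`).
-/

open Finset

variable {P : Type*} [Fintype P] [DecidableEq P]

theorem Finset.eq_of_forall_sum_powerset_eq {α M : Type*} [DecidableEq α] [AddCommGroup M]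
    {f g : Finset α → M} (h : ∀ s : Finset α, ∑ t ∈ s.powerset, f t = ∑ t ∈ s.powerset, g t)
    (s : Finset α) : f s = g s := by
  induction s using Finset.strongInduction with
  | H s ih =>
    have hs := h s
    rw [← add_sum_erase _ _ (mem_powerset_self s), ← add_sum_erase _ _ (mem_powerset_self s),
      sum_congr (s₁ := s.powerset.erase s) rfl fun t ht => ih t (mem_ssubsets.1 ht)] at hs
    exact add_right_cancel hs

theorem sum_range_choose_mul_eq_of_rec (q w : ℕ → ℝ) (n : ℕ) (hw0 : w 0 = q n)
    (hwk : ∀ k, 1 ≤ k → k ≤ n → w k = q (n - k) - ∑ i ∈ range k, (k.choose i : ℝ) * w i)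
    {k : ℕ} (hk : k ≤ n) : ∑ i ∈ range (k + 1), (k.choose i : ℝ) * w i = q (n - k) := by
  rw [sum_range_succ, Nat.choose_self, Nat.cast_one, one_mul]
  rcases Nat.eq_zero_or_pos k with rfl | hpos
  · simp [hw0]
  · rw [hwk k hpos hk]
    ring

section BoolCube

variable {α : Type*} [Fintype α] [DecidableEq α]

theorem decide_mem_filter_eq_true (x : α → Bool) :
    (fun i => decide (i ∈ univ.filter fun j => x j = true)) = x := by
  funext i
  cases h : x i <;> simp [h]

theorem zmarg_compl_eq_sum_powerset (p : (α → Bool) → ℝ) (S : Finset α) :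
    zmarg p Sᶜ = ∑ T ∈ S.powerset, p (fun i => decide (i ∈ T)) := by
  refine sum_bij' (fun z _ => univ.filter fun i => z i = true) (fun T _ i => decide (i ∈ T))
    ?_ ?_ ?_ ?_ ?_
  · intro z hz
    simp only [mem_filter, mem_univ, true_and, mem_compl] at hz
    rw [mem_powerset]
    intro i hi
    by_contra hiS
    simp [hz i hiS] at hi
  · intro T hT
    simp only [mem_filter, mem_univ, true_and, mem_compl, decide_eq_false_iff_not]
    exact fun i hiS hiT => hiS (mem_powerset.1 hT hiT)
  · exact fun z _ => decide_mem_filter_eq_true z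
  · intro T _
    ext i
    simp
  · intro z _
    rw [decide_mem_filter_eq_true]

end BoolCube

theorem stmt_7_general (p : (P → Bool) → ℝ) (q : ℕ → ℝ)
    (hq : ∀ H : Finset P, zmarg p H = q H.card)
    (w : ℕ → ℝ) (hw0 : w 0 = q (Fintype.card P))
    (hwk : ∀ k, 1 ≤ k → k ≤ Fintype.card P →
      w k = q (Fintype.card P - k) - ∑ i ∈ Finset.range k, (k.choose i : ℝ) * w i) :
    ∀ x : P → Bool, p x = w (nnz x) := by
  have hsupport : ∀ S : Finset P, p (fun i => decide (i ∈ S)) = w #S := by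
    refine Finset.eq_of_forall_sum_powerset_eq fun S => ?_
    rw [← zmarg_compl_eq_sum_powerset, hq, card_compl, sum_powerset_apply_card]
    simp only [nsmul_eq_mul]
    exact (sum_range_choose_mul_eq_of_rec q w _ hw0 hwk (card_le_univ S)).symm
  intro x
  have hx := hsupport (univ.filter fun j => x j = true)
  rwa [decide_mem_filter_eq_true] at hx

theorem stmt_7 (p : (P → Bool) → ℝ) (hp : IsDist p) (q : ℕ → ℝ)
    (hq01 : ∀ h ≤ Fintype.card P, 0 ≤ q h ∧ q h ≤ 1)
    (hq : ∀ H : Finset P, zmarg p H = q H.card)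
    (w : ℕ → ℝ) (hw0 : w 0 = q (Fintype.card P))
    (hwk : ∀ k, 1 ≤ k → k ≤ Fintype.card P →
      w k = q (Fintype.card P - k) - ∑ i ∈ Finset.range k, (k.choose i : ℝ) * w i) :
    ∀ x : P → Bool, p x = w (nnz x) :=
  stmt_7_general p q hq w hw0 hwk
end

section
/- Let p be a symmetric distribution on {0,1}^P with zero-marginal function q (so p_H(0) = q(|H|)). Then q is completely monotone in the discrete sense along the recursion: for each k, q(n−k) − ∑_{i=0}^{k−1} C(k,i) w(i) = w(k) ≥ 0, where w(0) = q(n) and w is defined by that recursion; i.e., the recursively defined w is nonnegative. -/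
/-!
By symmetry `p x` depends only on the number `j` of ones of `x`; write `f j` for this value.
A configuration vanishes on `Kᶜ` iff its ones form a subset of `K`, so counting subsets by size
gives `q (n - k) = ∑_{j ≤ k} C(k, j) f j`. The recursion defining `w` is exactly the inversion
of this binomial transform, hence `w k = f k`, a value of `p`, which is nonnegative.
-/

open Finset

variable {P : Type*} [Fintype P] [DecidableEq P]

open scoped Pointwise

def boolIndicator (S : Finset P) : P → Bool := fun i => decide (i ∈ S)

def boolIndicatorEquiv : Finset P ≃ (P → Bool) where
  toFun := boolIndicator
  invFun x := univ.filter fun i => x i = true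
  left_inv S := by ext; simp [boolIndicator]
  right_inv x := by funext i; simp [boolIndicator]

lemma nnz_boolIndicator (S : Finset P) : nnz (boolIndicator S) = S.card := by
  simp [nnz, boolIndicator]

lemma SymmP.apply_boolIndicator_eq {α : Type*} [DecidableEq α] {p : (α → Bool) → ℝ}
    (hs : SymmP p) {S T : Finset α} (h : S.card = T.card) : p (boolIndicator S) = p (boolIndicator T) := by
  obtain ⟨σ, hσ⟩ := (Set.powersetCard.isPretransitive (n := T.card)).exists_smul_eq
    ⟨T, rfl⟩ ⟨S, h⟩
  have hST : σ • T = S := congrArg Subtype.val hσ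
  have : boolIndicator S ∘ σ = boolIndicator T := by
    funext i
    simp [boolIndicator, ← hST, ← Equiv.Perm.smul_def, Finset.smul_mem_smul_finset_iff]
  rw [← this, hs]

lemma SymmP.factorsThrough_nnz {p : (P → Bool) → ℝ} (hs : SymmP p) :
    Function.FactorsThrough p nnz := by
  intro x y h
  obtain ⟨S, rfl⟩ := boolIndicatorEquiv.surjective x
  obtain ⟨T, rfl⟩ := boolIndicatorEquiv.surjective y
  exact hs.apply_boolIndicator_eq (by simpa [boolIndicatorEquiv, nnz_boolIndicator] using h)

lemma zmarg_compl_eq_sum_powerset_s15 (p : (P → Bool) → ℝ) (K : Finset P) :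
    zmarg p Kᶜ = ∑ S ∈ K.powerset, p (boolIndicator S) := by
  refine (Finset.sum_equiv boolIndicatorEquiv ?_ fun _ _ => rfl).symm
  intro S
  simp [boolIndicatorEquiv, boolIndicator, subset_iff, not_imp_not]

/-- `Function.extend nnz p 0 j` is the common value of `p` on the configurations with `j` ones. -/
lemma SymmP.zmarg_compl_eq_sum_choose {p : (P → Bool) → ℝ} (hs : SymmP p) (K : Finset P) :
    zmarg p Kᶜ = ∑ j ∈ range (#K + 1), ((#K).choose j : ℝ) * Function.extend nnz p 0 j := by
  rw [zmarg_compl_eq_sum_powerset_s15, sum_powerset]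
  refine sum_congr rfl fun j _ => ?_
  have hconst : ∀ S ∈ K.powersetCard j, p (boolIndicator S) = Function.extend nnz p 0 j :=
    fun S hS => by
      rw [← (mem_powersetCard.mp hS).2, ← nnz_boolIndicator,
        hs.factorsThrough_nnz.extend_apply]
  rw [sum_congr rfl hconst, sum_const, card_powersetCard, nsmul_eq_mul]

theorem binomial_inversion {R : Type*} [CommRing R] {a f w : ℕ → R} {N : ℕ}
    (ha : ∀ k ≤ N, a k = ∑ j ∈ range (k + 1), (k.choose j : R) * f j)
    (hw : ∀ k ≤ N, w k = a k - ∑ i ∈ range k, (k.choose i : R) * w i) :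
    ∀ k ≤ N, w k = f k := by
  intro k
  induction k using Nat.strong_induction_on with
  | _ k ih =>
    intro hk
    have hlow : ∑ i ∈ range k, (k.choose i : R) * w i = ∑ i ∈ range k, (k.choose i : R) * f i :=
      sum_congr rfl fun i hi => by rw [ih i (mem_range.mp hi) (by grind)]
    rw [hw k hk, ha k hk, hlow, sum_range_succ]
    simp

theorem stmt_15_general (p : (P → Bool) → ℝ) (hp : IsDist p) (hs : SymmP p)
    (q : ℕ → ℝ)
    (hq : ∀ H : Finset P, zmarg p H = q H.card)
    (w : ℕ → ℝ) (hw0 : w 0 = q (Fintype.card P))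
    (hwk : ∀ k, 1 ≤ k → k ≤ Fintype.card P →
      w k = q (Fintype.card P - k) - ∑ i ∈ Finset.range k, (k.choose i : ℝ) * w i) :
    ∀ k ≤ Fintype.card P, 0 ≤ w k := by
  set n := Fintype.card P
  have hrec : ∀ k ≤ n, w k = q (n - k) - ∑ i ∈ range k, (k.choose i : ℝ) * w i := by
    intro k hk
    rcases Nat.eq_zero_or_pos k with rfl | hk0
    · simpa using hw0
    · exact hwk k hk0 hk
  have hq_binomial : ∀ k ≤ n, q (n - k) =
      ∑ j ∈ range (k + 1), (k.choose j : ℝ) * Function.extend nnz p 0 j := by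
    intro k hk
    obtain ⟨K, -, rfl⟩ := exists_subset_card_eq (s := (univ : Finset P)) hk
    rw [← hs.zmarg_compl_eq_sum_choose, hq, card_compl]
  intro k hk
  obtain ⟨K, -, rfl⟩ := exists_subset_card_eq (s := (univ : Finset P)) hk
  rw [binomial_inversion hq_binomial hrec _ hk, ← nnz_boolIndicator,
    hs.factorsThrough_nnz.extend_apply]
  exact (hp.1 _).1

theorem stmt_15 (p : (P → Bool) → ℝ) (hp : IsDist p) (hs : SymmP p)
    (q : ℕ → ℝ) (hq0 : q 0 = 1)
    (hq : ∀ H : Finset P, zmarg p H = q H.card)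
    (w : ℕ → ℝ) (hw0 : w 0 = q (Fintype.card P))
    (hwk : ∀ k, 1 ≤ k → k ≤ Fintype.card P →
      w k = q (Fintype.card P - k) - ∑ i ∈ Finset.range k, (k.choose i : ℝ) * w i) :
    ∀ k ≤ Fintype.card P, 0 ≤ w k :=
  stmt_15_general p hp hs q hq w hw0 hwk
end
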